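/- arXiv:1805.09415 — 2 statements merged into one kernel-verified Lean document; each statement's English description precedes it below -/
import Mathlib

section
/- Let (X_t) be a random process over the reals adapted to its natural filtration, and let T = inf{t : X_t ≤ 0}. Suppose (a) X_t ≥ 0 for all t ≤ T, (b) there is δ > 0 such that X_t − E[X_{t+1} | X_0,…,X_t] ≥ δ for all t < T, and (c) there is c ≥ 0 such that X_t ≤ c for all t < T. Then E[T | X_0] ≤ X_0/δ. -/
open MeasureTheory ProbabilityTheory Filter
open scoped ENNReal NNReal

/-- The natural filtration of the process `X` up to time `t`:
the σ-algebra generated by `X 0, …, X t`. -/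
noncomputable def natSigma {Ω : Type*} [MeasurableSpace Ω] (X : ℕ → Ω → ℝ) (t : ℕ) :
    MeasurableSpace Ω :=
  ⨆ s ∈ Finset.range (t + 1), MeasurableSpace.comap (X s) inferInstance

/-- The first-hitting time `T = inf {t : X t ≤ 0}` (equal to `⊤` if no such time exists). -/
noncomputable def hitZero {Ω : Type*} (X : ℕ → Ω → ℝ) (ω : Ω) : ℕ∞ :=
  sInf ((fun n : ℕ => (n : ℕ∞)) '' {t : ℕ | X t ω ≤ 0})

/-! On an event `A` determined by `X 0`, the drift condition makes `t ↦ ∫_{A ∩ {t < T}} X t`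
decrease by at least `δ · μ (A ∩ {t < T})` at each step, while it stays nonnegative. Summing
over `t` and using `T = ∑ₜ 1{t < T}` gives `δ · ∫_A T ≤ ∫_A X 0` for every `A ∈ σ(X 0)`, which
is the claimed bound on the conditional expectation of `T`, computed against `condExpKernel`. -/

lemma ENat.toENNReal_eq_tsum_ite_lt (m : ℕ∞) :
    (m : ℝ≥0∞) = ∑' t : ℕ, if (t : ℕ∞) < m then 1 else 0 := by
  induction m with
  | top => simp
  | coe n =>
    rw [tsum_eq_sum (s := Finset.range n) (fun t ht => by simpa using ht)]
    simp [Finset.filter_true_of_mem fun t => Finset.mem_range.mp]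

lemma MeasureTheory.lintegral_enat_eq_tsum_measure_lt {Ω : Type*} [MeasurableSpace Ω]
    (μ : Measure Ω) {τ : Ω → ℕ∞} (h_lt : ∀ t : ℕ, MeasurableSet {ω | (t : ℕ∞) < τ ω}) :
    ∫⁻ ω, (τ ω : ℝ≥0∞) ∂μ = ∑' t : ℕ, μ {ω | (t : ℕ∞) < τ ω} := by
  have h_ind (ω : Ω) : (τ ω : ℝ≥0∞) = ∑' t : ℕ, {ω | (t : ℕ∞) < τ ω}.indicator 1 ω := by
    simp [ENat.toENNReal_eq_tsum_ite_lt (τ ω), Set.indicator_apply]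
  simp_rw [h_ind]
  rw [lintegral_tsum fun t => (measurable_one.indicator (h_lt t)).aemeasurable]
  simp_rw [lintegral_indicator_one (h_lt _)]

section Drift
variable {Ω : Type*} {mΩ : MeasurableSpace Ω} {μ : Measure Ω} [IsFiniteMeasure μ]
  {ℱ : Filtration ℕ mΩ} {X : ℕ → Ω → ℝ} {τ : Ω → ℕ∞} {δ : ℝ}

lemma setIntegral_succ_add_mul_measureReal_le_of_drift (hτ : IsStoppingTime ℱ τ)
    (hXint : ∀ t, Integrable (X t) μ)
    (hnonneg : ∀ t : ℕ, ∀ᵐ ω ∂μ, (t : ℕ∞) ≤ τ ω → 0 ≤ X t ω)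
    (hdrift : ∀ t : ℕ, ∀ᵐ ω ∂μ, (t : ℕ∞) < τ ω → δ ≤ X t ω - μ[X (t + 1) | ℱ t] ω)
    {t : ℕ} {A : Set Ω} (hA : MeasurableSet[ℱ t] A) :
    ∫ ω in A ∩ {ω | ((t + 1 : ℕ) : ℕ∞) < τ ω}, X (t + 1) ω ∂μ
        + δ * μ.real (A ∩ {ω | (t : ℕ∞) < τ ω})
      ≤ ∫ ω in A ∩ {ω | (t : ℕ∞) < τ ω}, X t ω ∂μ := by
  set E := A ∩ {ω | (t : ℕ∞) < τ ω}
  have hEℱ : MeasurableSet[ℱ t] E := hA.inter (hτ.measurableSet_gt t)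
  have hE : MeasurableSet E := ℱ.le t _ hEℱ
  have h_succ_nonneg : 0 ≤ᵐ[μ.restrict E] X (t + 1) := by
    rw [EventuallyLE, ae_restrict_iff' hE]
    filter_upwards [hnonneg (t + 1)] with ω h hω
    have h_lt : (t : ℕ∞) < τ ω := hω.2
    exact h (by push_cast; exact Order.add_one_le_of_lt h_lt)
  have h_drift : ∀ᵐ ω ∂μ.restrict E, μ[X (t + 1) | ℱ t] ω + δ ≤ X t ω := by
    rw [ae_restrict_iff' hE]
    filter_upwards [hdrift t] with ω h hω
    linarith [h hω.2]
  calc ∫ ω in A ∩ {ω | ((t + 1 : ℕ) : ℕ∞) < τ ω}, X (t + 1) ω ∂μ + δ * μ.real E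
      ≤ ∫ ω in E, X (t + 1) ω ∂μ + δ * μ.real E := by
        gcongr ?_ + _
        refine setIntegral_mono_set (hXint _).integrableOn h_succ_nonneg
          (Eventually.of_forall fun ω hω => ⟨hω.1, ?_⟩)
        have h_lt : ((t + 1 : ℕ) : ℕ∞) < τ ω := hω.2
        exact lt_trans (by exact_mod_cast Nat.lt_add_one t) h_lt
    _ = ∫ ω in E, (μ[X (t + 1) | ℱ t] ω + δ) ∂μ := by
        rw [integral_add integrable_condExp.integrableOn (integrable_const δ).integrableOn,
          setIntegral_condExp (ℱ.le t) (hXint _) hEℱ, setIntegral_const, smul_eq_mul, mul_comm]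
    _ ≤ ∫ ω in E, X t ω ∂μ :=
        integral_mono_ae (integrable_condExp.integrableOn.add (integrable_const δ).integrableOn)
          (hXint t).integrableOn h_drift

lemma mul_sum_measureReal_lt_le_setIntegral_of_drift (hτ : IsStoppingTime ℱ τ)
    (hXint : ∀ t, Integrable (X t) μ)
    (hnonneg : ∀ t : ℕ, ∀ᵐ ω ∂μ, (t : ℕ∞) ≤ τ ω → 0 ≤ X t ω)
    (hdrift : ∀ t : ℕ, ∀ᵐ ω ∂μ, (t : ℕ∞) < τ ω → δ ≤ X t ω - μ[X (t + 1) | ℱ t] ω)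
    {A : Set Ω} (hA : MeasurableSet[ℱ 0] A) (n : ℕ) :
    δ * ∑ t ∈ Finset.range n, μ.real (A ∩ {ω | (t : ℕ∞) < τ ω}) ≤ ∫ ω in A, X 0 ω ∂μ := by
  have hA' : MeasurableSet A := ℱ.le 0 _ hA
  have h_telescope : ∀ k : ℕ, δ * ∑ t ∈ Finset.range k, μ.real (A ∩ {ω | (t : ℕ∞) < τ ω})
      + ∫ ω in A ∩ {ω | (k : ℕ∞) < τ ω}, X k ω ∂μ
      ≤ ∫ ω in A ∩ {ω | ((0 : ℕ) : ℕ∞) < τ ω}, X 0 ω ∂μ := by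
    intro k
    induction k with
    | zero => simp
    | succ k ih =>
      have := setIntegral_succ_add_mul_measureReal_le_of_drift hτ hXint hnonneg hdrift
        (ℱ.mono k.zero_le _ hA)
      rw [Finset.sum_range_succ]
      linarith
  have h_tail : 0 ≤ ∫ ω in A ∩ {ω | (n : ℕ∞) < τ ω}, X n ω ∂μ := by
    refine setIntegral_nonneg_of_ae_restrict ((ae_restrict_iff' ?_).mpr ?_)
    · exact hA'.inter (ℱ.le n _ (hτ.measurableSet_gt n))
    · filter_upwards [hnonneg n] with ω h hω using h hω.2.le
  have h_head : ∫ ω in A ∩ {ω | ((0 : ℕ) : ℕ∞) < τ ω}, X 0 ω ∂μ ≤ ∫ ω in A, X 0 ω ∂μ := by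
    refine setIntegral_mono_set (hXint 0).integrableOn (ae_restrict_of_ae ?_)
      (Eventually.of_forall Set.inter_subset_left)
    filter_upwards [hnonneg 0] with ω h using h (by simp)
  linarith [h_telescope n]

lemma setLIntegral_le_of_drift (hδ : 0 < δ) (hτ : IsStoppingTime ℱ τ)
    (hXint : ∀ t, Integrable (X t) μ)
    (hnonneg : ∀ t : ℕ, ∀ᵐ ω ∂μ, (t : ℕ∞) ≤ τ ω → 0 ≤ X t ω)
    (hdrift : ∀ t : ℕ, ∀ᵐ ω ∂μ, (t : ℕ∞) < τ ω → δ ≤ X t ω - μ[X (t + 1) | ℱ t] ω)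
    {A : Set Ω} (hA : MeasurableSet[ℱ 0] A) :
    ∫⁻ ω in A, (τ ω : ℝ≥0∞) ∂μ ≤ ∫⁻ ω in A, ENNReal.ofReal (X 0 ω / δ) ∂μ := by
  have hA' : MeasurableSet A := ℱ.le 0 _ hA
  have hX₀ : 0 ≤ᵐ[μ.restrict A] fun ω => X 0 ω / δ := by
    refine ae_restrict_of_ae ?_
    filter_upwards [hnonneg 0] with ω h using div_nonneg (h (by simp)) hδ.le
  rw [lintegral_enat_eq_tsum_measure_lt _ fun t => ℱ.le t _ (hτ.measurableSet_gt t),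
    ← ofReal_integral_eq_lintegral_ofReal ((hXint 0).div_const δ).integrableOn hX₀,
    integral_div]
  refine ENNReal.tsum_le_of_sum_range_le fun n => ?_
  have h_sum := mul_sum_measureReal_lt_le_setIntegral_of_drift hτ hXint hnonneg hdrift hA n
  calc ∑ t ∈ Finset.range n, μ.restrict A {ω | (t : ℕ∞) < τ ω}
      = ENNReal.ofReal (∑ t ∈ Finset.range n, μ.real (A ∩ {ω | (t : ℕ∞) < τ ω})) := by
        rw [ENNReal.ofReal_sum_of_nonneg fun _ _ => measureReal_nonneg]
        refine Finset.sum_congr rfl fun t _ => ?_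
        rw [Measure.restrict_apply' hA', Set.inter_comm, ofReal_measureReal]
    _ ≤ ENNReal.ofReal ((∫ ω in A, X 0 ω ∂μ) / δ) :=
        ENNReal.ofReal_le_ofReal ((le_div_iff₀' hδ).mpr h_sum)

end Drift

section CondExpKernel
variable {Ω : Type*} {m : MeasurableSpace Ω} [mΩ : MeasurableSpace Ω] [StandardBorelSpace Ω]
  {μ : Measure Ω} [IsFiniteMeasure μ]

lemma setLIntegral_condExpKernel (hm : m ≤ mΩ) {f : Ω → ℝ≥0∞} (hf : Measurable f) {A : Set Ω}
    (hA : MeasurableSet[m] A) :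
    ∫⁻ ω in A, ∫⁻ y, f y ∂condExpKernel μ m ω ∂μ = ∫⁻ ω in A, f ω ∂μ := by
  have hf₂ : Measurable[m.prod mΩ] fun p : Ω × Ω => f p.2 := hf.comp measurable_snd
  have hdiag : @Measurable _ _ mΩ (m.prod mΩ) Function.diag :=
    (measurable_id'' hm).prodMk measurable_id
  rw [← setLIntegral_trim hm hf.lintegral_kernel hA]
  calc _ = ∫⁻ p in A ×ˢ Set.univ, f p.2 ∂(μ.trim hm ⊗ₘ condExpKernel μ m) := by
        rw [Measure.setLIntegral_compProd hf₂ hA MeasurableSet.univ]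
        simp
    _ = ∫⁻ ω in A, f ω ∂μ := by
        rw [compProd_trim_condExpKernel,
          @setLIntegral_map _ _ mΩ (m.prod mΩ) _ _ _ _ (hA.prod MeasurableSet.univ) hf₂ hdiag]
        simp

lemma ae_lintegral_condExpKernel_le (hm : m ≤ mΩ) {f g : Ω → ℝ≥0∞} (hf : Measurable f)
    (hg : Measurable[m] g)
    (h : ∀ A, MeasurableSet[m] A → ∫⁻ ω in A, f ω ∂μ ≤ ∫⁻ ω in A, g ω ∂μ) :
    ∀ᵐ ω ∂μ, ∫⁻ y, f y ∂condExpKernel μ m ω ≤ g ω := by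
  refine ae_of_ae_trim hm
    (ae_le_of_forall_setLIntegral_le_of_sigmaFinite hf.lintegral_kernel fun A hA _ => ?_)
  rw [setLIntegral_trim hm hf.lintegral_kernel hA, setLIntegral_trim hm hg hA,
    setLIntegral_condExpKernel hm hf hA]
  exact h A hA

end CondExpKernel

lemma hitZero_eq_hittingAfter {Ω : Type*} (X : ℕ → Ω → ℝ) :
    hitZero X = hittingAfter X (Set.Iic 0) 0 := by
  funext ω
  rw [hittingAfter]
  split_ifs with h <;> simp only [zero_le, true_and, Set.mem_Iic] at h ⊢
  · rw [hitZero, sInf_image]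
    exact (ENat.natCast_sInf (s := {t | X t ω ≤ 0}) h).symm
  · push Not at h
    simp only [hitZero, fun t => not_le.mpr (h t), Set.ofPred_false, Set.image_empty, sInf_empty]
    rfl

lemma natSigma_eq_natural {Ω : Type*} [MeasurableSpace Ω] (X : ℕ → Ω → ℝ)
    (hX : ∀ t, StronglyMeasurable (X t)) (t : ℕ) :
    natSigma X t = Filtration.natural X hX t := by
  simp [natSigma, Filtration.natural]

theorem upper_additive_drift_bounded_general
    {Ω : Type*} [MeasurableSpace Ω] [StandardBorelSpace Ω]
    (μ : Measure Ω) [IsProbabilityMeasure μ]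
    (X : ℕ → Ω → ℝ) (hXmeas : ∀ t, Measurable (X t)) (hXint : ∀ t, Integrable (X t) μ)
    (T : Ω → ℕ∞) (hT : ∀ ω, T ω = hitZero X ω)
    (δ : ℝ) (hδ : 0 < δ)
    (hnonneg : ∀ t : ℕ, ∀ᵐ ω ∂μ, (t : ℕ∞) ≤ T ω → 0 ≤ X t ω)
    (hdrift : ∀ t : ℕ, ∀ᵐ ω ∂μ, (t : ℕ∞) < T ω →
      δ ≤ X t ω - (μ[X (t + 1) | natSigma X t]) ω) :
    ∀ᵐ ω ∂μ,
      (∫⁻ ω', (T ω' : ℝ≥0∞) ∂(condExpKernel μ (MeasurableSpace.comap (X 0) inferInstance) ω))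
        ≤ ENNReal.ofReal (X 0 ω / δ) := by
  obtain rfl : T = hitZero X := funext hT
  let ℱ := Filtration.natural X fun t => (hXmeas t).stronglyMeasurable
  have hτ : IsStoppingTime ℱ (hitZero X) := by
    rw [hitZero_eq_hittingAfter]
    exact (Filtration.stronglyAdapted_natural _).adapted.isStoppingTime_hittingAfter
      measurableSet_Iic
  have hdrift' : ∀ t : ℕ, ∀ᵐ ω ∂μ, (t : ℕ∞) < hitZero X ω →
      δ ≤ X t ω - μ[X (t + 1) | ℱ t] ω := by
    simpa only [natSigma_eq_natural X fun t => (hXmeas t).stronglyMeasurable] using hdrift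
  have h_comap_le : MeasurableSpace.comap (X 0) inferInstance ≤ ℱ 0 :=
    le_iSup₂_of_le 0 le_rfl le_rfl
  have hX₀_meas : Measurable[MeasurableSpace.comap (X 0) inferInstance] (X 0) :=
    comap_measurable _
  exact ae_lintegral_condExpKernel_le (hXmeas 0).comap_le
    ((WithTop.measurable_of_measurable_comp_coe Measurable.of_discrete).comp hτ.measurable')
    (hX₀_meas.div_const δ).ennreal_ofReal
    fun A hA => setLIntegral_le_of_drift hδ hτ hXint hnonneg hdrift' (h_comap_le _ hA)

/-- **Upper Additive Drift, Bounded.** -/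
theorem upper_additive_drift_bounded
    {Ω : Type*} [MeasurableSpace Ω] [StandardBorelSpace Ω]
    (μ : Measure Ω) [IsProbabilityMeasure μ]
    (X : ℕ → Ω → ℝ) (hXmeas : ∀ t, Measurable (X t)) (hXint : ∀ t, Integrable (X t) μ)
    (T : Ω → ℕ∞) (hT : ∀ ω, T ω = hitZero X ω)
    (δ : ℝ) (hδ : 0 < δ) (c : ℝ) (hc : 0 ≤ c)
    (hnonneg : ∀ t : ℕ, ∀ᵐ ω ∂μ, (t : ℕ∞) ≤ T ω → 0 ≤ X t ω)
    (hdrift : ∀ t : ℕ, ∀ᵐ ω ∂μ, (t : ℕ∞) < T ω →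
      δ ≤ X t ω - (μ[X (t + 1) | natSigma X t]) ω)
    (hbounded : ∀ t : ℕ, ∀ᵐ ω ∂μ, (t : ℕ∞) < T ω → X t ω ≤ c) :
    ∀ᵐ ω ∂μ,
      (∫⁻ ω', (T ω' : ℝ≥0∞) ∂(condExpKernel μ (MeasurableSpace.comap (X 0) inferInstance) ω))
        ≤ ENNReal.ofReal (X 0 ω / δ) :=
  upper_additive_drift_bounded_general μ X hXmeas hXint T hT δ hδ hnonneg hdrift
end

section
/- Let (X_t) be a random process over the reals, let x_min ≥ 0, and let T = inf{t : X_t ≤ x_min}. Let D be the smallest real interval containing all values x ≥ x_min that X_t can take for t ≤ T. Suppose (a) X_t ≥ x_min for all t ≤ T, and (b) there is a monotonically increasing function h : D → ℝ_{>0} such that X_t − E[X_{t+1} | X_0,…,X_t] ≥ h(X_t) for all t < T. Then E[T | X_0] ≤ ∫_{x_min}^{X_0} dz/h(z). -/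
/-!
The potential `g x = ∫ z in xmin..x, 1 / h z` is concave on `D ∩ [xmin, ∞)` with supergradient
`1 / h`, so the drift condition makes `g (X t) + t`, stopped at `T`, a supermartingale. Conditioning
on `X 0` bounds the expected number of steps taken before any time `n` by `g (X 0)`, and monotone
convergence in `n` gives the bound on the conditional expectation of `T`. To make `g (X t)` and
`1 / h (X t)` measurable and integrable, `1 / h` is first replaced by a bounded antitone extension
of its restriction to `D ∩ [xmin, ∞)`.
-/

open MeasureTheory ProbabilityTheory Filter
open scoped ENNReal NNReal

open Set

theorem Antitone.integral_le_integral_add_sub_mul {φ : ℝ → ℝ} (hφ : Antitone φ) (a x y : ℝ) :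
    ∫ z in a..y, φ z ≤ (∫ z in a..x, φ z) + (y - x) * φ x := by
  have hstep : ∫ z in x..y, φ z ≤ (y - x) * φ x := by
    rcases le_total x y with hxy | hyx
    · calc ∫ z in x..y, φ z ≤ ∫ _ in x..y, φ x :=
            intervalIntegral.integral_mono_on hxy hφ.intervalIntegrable intervalIntegrable_const
              fun z hz => hφ hz.1
        _ = (y - x) * φ x := by simp
    · calc ∫ z in x..y, φ z = -∫ z in y..x, φ z := intervalIntegral.integral_symm y x
        _ ≤ -∫ _ in y..x, φ x := neg_le_neg <|
            intervalIntegral.integral_mono_on hyx intervalIntegrable_const hφ.intervalIntegrable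
              fun z hz => hφ hz.2
        _ = (y - x) * φ x := by simp; ring
  rw [← intervalIntegral.integral_add_adjacent_intervals hφ.intervalIntegrable
    hφ.intervalIntegrable]
  linarith

theorem exists_antitone_inv_extension {h : ℝ → ℝ} {E : Set ℝ} {a : ℝ} (ha : IsLeast E a)
    (hmono : MonotoneOn h E) (hpos : ∀ x ∈ E, 0 < h x) :
    ∃ φ : ℝ → ℝ, Antitone φ ∧ (∀ x, φ x ∈ Icc 0 (h a)⁻¹) ∧ EqOn (fun x => (h x)⁻¹) φ E := by
  have hanti : AntitoneOn (fun x => (h x)⁻¹) E := fun x hx y hy hxy =>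
    inv_anti₀ (hpos x hx) (hmono hx hy hxy)
  have hbd : ∀ x ∈ E, (h x)⁻¹ ∈ Icc 0 (h a)⁻¹ := fun x hx =>
    ⟨inv_nonneg.2 (hpos x hx).le, hanti ha.1 hx (ha.2 hx)⟩
  obtain ⟨ψ, hψ, hψE⟩ := hanti.exists_antitone_extension
    ⟨0, forall_mem_image.2 fun x hx => (hbd x hx).1⟩
    ⟨(h a)⁻¹, forall_mem_image.2 fun x hx => (hbd x hx).2⟩
  refine ⟨fun x => max 0 (min (ψ x) (h a)⁻¹), fun x y hxy => ?_, fun x => ?_, fun x hx => ?_⟩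
  · exact max_le_max le_rfl (min_le_min_right _ (hψ hxy))
  · exact ⟨le_max_left _ _, max_le (inv_nonneg.2 (hpos a ha.1).le) (min_le_right _ _)⟩
  · simp only [← hψE hx, min_eq_left (hbd x hx).2, max_eq_right (hbd x hx).1]

theorem ENat.toENNReal_eq_tsum_ite (n : ℕ∞) :
    (n : ℝ≥0∞) = ∑' t : ℕ, if (t : ℕ∞) < n then 1 else 0 := by
  induction n using ENat.recTopCoe with
  | top => simp
  | coe k =>
    simp only [Nat.cast_lt, ENat.toENNReal_coe]
    rw [tsum_eq_sum (s := Finset.range k) fun t ht => if_neg (by simpa using ht),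
      Finset.sum_ite_of_true fun t ht => Finset.mem_range.1 ht]
    simp

theorem ENat.coe_lt_sInf_image_coe_iff {S : Set ℕ} {t : ℕ} :
    (t : ℕ∞) < sInf ((fun n : ℕ => (n : ℕ∞)) '' S) ↔ ∀ s ∈ S, t < s := by
  rw [← not_le, ← ENat.lt_add_one_iff (ENat.natCast_ne_top t), sInf_lt_iff]
  simp only [mem_image, exists_exists_and_eq_and]
  norm_cast
  simp

section ConditionalExpectation

variable {Ω : Type*} {m : MeasurableSpace Ω} [mΩ : MeasurableSpace Ω] {μ : Measure Ω}
  [IsFiniteMeasure μ]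

theorem integrable_intervalIntegral_comp {φ : ℝ → ℝ} {c : ℝ}
    (hφ : ∀ a b, IntervalIntegrable φ volume a b) (hφbd : ∀ x, ‖φ x‖ ≤ c) {Y : Ω → ℝ}
    (hY : Measurable Y) (hYi : Integrable Y μ) (a : ℝ) :
    Integrable (fun ω => ∫ z in a..Y ω, φ z) μ :=
  ((hYi.sub (integrable_const a)).norm.const_mul c).mono'
    ((intervalIntegral.continuous_primitive hφ a).measurable.comp hY).aestronglyMeasurable
    (ae_of_all _ fun _ => intervalIntegral.norm_integral_le_of_norm_le_const fun z _ => hφbd z)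

theorem condExp_add_mul_sub_ae_eq (hm : m ≤ mΩ) {Z B X Y : Ω → ℝ} {c : ℝ}
    (hZ : StronglyMeasurable[m] Z) (hZi : Integrable Z μ) (hB : StronglyMeasurable[m] B)
    (hBbd : ∀ ω, ‖B ω‖ ≤ c) (hX : StronglyMeasurable[m] X) (hXi : Integrable X μ)
    (hYi : Integrable Y μ) :
    μ[Z + B * (Y - X) | m] =ᵐ[μ] Z + B * (μ[Y | m] - X) := by
  have hsub : μ[Y - X | m] =ᵐ[μ] μ[Y | m] - X :=
    (condExp_sub hYi hXi m).trans (by rw [condExp_of_stronglyMeasurable hm hX hXi])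
  have hBYXi : Integrable (B * (Y - X)) μ :=
    (hYi.sub hXi).bdd_mul (hB.mono hm).aestronglyMeasurable (ae_of_all _ hBbd)
  filter_upwards [condExp_add hZi hBYXi m,
    condExp_stronglyMeasurable_mul_of_bound hm hB (hYi.sub hXi) c (ae_of_all _ hBbd), hsub]
    with ω hadd hmul hsubω
  rw [hadd, Pi.add_apply, hmul, Pi.mul_apply, hsubω, condExp_of_stronglyMeasurable hm hZ hZi,
    Pi.add_apply, Pi.mul_apply]

theorem condExp_indicator_comp_add_indicator_one_le (hm : m ≤ mΩ) {g φ : ℝ → ℝ} {c : ℝ}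
    (hsupergrad : ∀ x y, g y ≤ g x + (y - x) * φ x) (hg : Measurable g) (hφ : Measurable φ)
    (hφbd : ∀ x, ‖φ x‖ ≤ c) {X Y : Ω → ℝ} (hX : Measurable[m] X) (hXi : Integrable X μ)
    (hYi : Integrable Y μ) (hgX : Integrable (g ∘ X) μ) (hgY : Integrable (g ∘ Y) μ)
    {A A' : Set Ω} (hA : MeasurableSet[m] A) (hA' : MeasurableSet A') (hA'A : A' ⊆ A)
    (hgY_nonneg : ∀ᵐ ω ∂μ, ω ∈ A → 0 ≤ g (Y ω))
    (hdrift : ∀ᵐ ω ∂μ, ω ∈ A → 1 ≤ φ (X ω) * (X ω - μ[Y | m] ω)) :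
    μ[A'.indicator (g ∘ Y) | m] + A.indicator (fun _ => 1) ≤ᵐ[μ] A.indicator (g ∘ X) := by
  set B := A.indicator (φ ∘ X)
  have hB : StronglyMeasurable[m] B := ((hφ.comp hX).indicator hA).stronglyMeasurable
  have hBbd (ω : Ω) : ‖B ω‖ ≤ c := (norm_indicator_le_norm_self _ ω).trans (hφbd _)
  have hpath : A'.indicator (g ∘ Y) ≤ᵐ[μ] A.indicator (g ∘ X) + B * (Y - X) := by
    filter_upwards [hgY_nonneg] with ω hω
    by_cases hωA : ω ∈ A
    · have hY : A'.indicator (g ∘ Y) ω ≤ g (Y ω) := by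
        by_cases hωA' : ω ∈ A' <;> simp [hωA', hω hωA]
      simp only [Pi.add_apply, Pi.mul_apply, Pi.sub_apply, B, indicator_of_mem hωA,
        Function.comp_apply]
      linarith [hsupergrad (X ω) (Y ω), mul_comm (φ (X ω)) (Y ω - X ω)]
    · have hωA' : ω ∉ A' := fun h => hωA (hA'A h)
      simp [B, hωA, hωA']
  have hRi : Integrable (A.indicator (g ∘ X) + B * (Y - X)) μ := (hgX.indicator (hm _ hA)).add
    ((hYi.sub hXi).bdd_mul (hB.mono hm).aestronglyMeasurable (ae_of_all _ hBbd))
  filter_upwards [condExp_mono (m := m) (hgY.indicator hA') hRi hpath,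
    condExp_add_mul_sub_ae_eq hm ((hg.comp hX).indicator hA).stronglyMeasurable
      (hgX.indicator (hm _ hA)) hB hBbd hX.stronglyMeasurable hXi hYi, hdrift]
    with ω hmono heq hdriftω
  rw [heq] at hmono
  by_cases hωA : ω ∈ A
  · simp only [Pi.add_apply, Pi.mul_apply, Pi.sub_apply, B, indicator_of_mem hωA,
      Function.comp_apply] at hmono ⊢
    linarith [hdriftω hωA, mul_sub (φ (X ω)) (μ[Y | m] ω) (X ω),
      mul_sub (φ (X ω)) (X ω) (μ[Y | m] ω)]
  · simpa [B, hωA] using hmono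

theorem lintegral_condExpKernel_le_of_sum_condExp_le [StandardBorelSpace Ω] (hm : m ≤ mΩ)
    {T : Ω → ℕ∞} (hT : ∀ t : ℕ, MeasurableSet {ω | (t : ℕ∞) < T ω}) {f : Ω → ℝ}
    (hsum : ∀ n, ∑ t ∈ Finset.range n, μ⟦{ω | (t : ℕ∞) < T ω} | m⟧ ≤ᵐ[μ] f) :
    ∀ᵐ ω ∂μ, ∫⁻ ω', (T ω' : ℝ≥0∞) ∂condExpKernel μ m ω ≤ ENNReal.ofReal (f ω) := by
  have hnonneg (t : ℕ) : 0 ≤ᵐ[μ] μ⟦{ω | (t : ℕ∞) < T ω} | m⟧ :=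
    condExp_nonneg (ae_of_all _ (indicator_nonneg fun _ _ => zero_le_one))
  filter_upwards [ae_all_iff.2 hsum, ae_all_iff.2 fun t => condExpKernel_ae_eq_condExp hm (hT t),
    ae_all_iff.2 hnonneg] with ω hsumω hκω hnonnegω
  calc ∫⁻ ω', (T ω' : ℝ≥0∞) ∂condExpKernel μ m ω
      = ∫⁻ ω', ∑' t : ℕ, {ω | (t : ℕ∞) < T ω}.indicator (fun _ => 1) ω' ∂condExpKernel μ m ω := by
        simp only [ENat.toENNReal_eq_tsum_ite (T _), indicator_apply, mem_ofPred_eq]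
    _ = ∑' t : ℕ, ENNReal.ofReal ((μ⟦{ω | (t : ℕ∞) < T ω} | m⟧) ω) := by
        rw [lintegral_tsum fun t => (measurable_const.indicator (hT t)).aemeasurable]
        refine tsum_congr fun t => ?_
        rw [lintegral_indicator_const (hT t), one_mul, ← hκω t, ofReal_measureReal]
    _ = ⨆ n, ENNReal.ofReal (∑ t ∈ Finset.range n, (μ⟦{ω | (t : ℕ∞) < T ω} | m⟧) ω) := by
        simp only [ENNReal.tsum_eq_iSup_nat,
          ENNReal.ofReal_sum_of_nonneg fun t _ => hnonnegω t]
    _ ≤ ENNReal.ofReal (f ω) := iSup_le fun n => ENNReal.ofReal_le_ofReal <| by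
        simpa only [Finset.sum_apply] using hsumω n

theorem sum_condExp_le_condExp_of_condExp_add_le {ℱ : ℕ → MeasurableSpace Ω}
    (hmℱ : ∀ t, m ≤ ℱ t) (hℱ : ∀ t, ℱ t ≤ mΩ) {Z I : ℕ → Ω → ℝ} (hZ : ∀ t, Integrable (Z t) μ)
    (hI : ∀ t, Integrable (I t) μ) (hZnonneg : ∀ t, 0 ≤ᵐ[μ] Z t)
    (hstep : ∀ t, μ[Z (t + 1) | ℱ t] + I t ≤ᵐ[μ] Z t) (n : ℕ) :
    ∑ t ∈ Finset.range n, μ[I t | m] ≤ᵐ[μ] μ[Z 0 | m] := by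
  have hstep_m (t : ℕ) : μ[I t | m] + μ[Z (t + 1) | m] ≤ᵐ[μ] μ[Z t | m] := by
    filter_upwards [condExp_mono (integrable_condExp.add (hI t)) (hZ t) (hstep t),
      condExp_add (m := m) integrable_condExp (hI t),
      condExp_condExp_of_le (μ := μ) (f := Z (t + 1)) (hmℱ t) (hℱ t)] with ω hmono hadd htower
    simp only [Pi.add_apply] at hmono hadd ⊢
    linarith
  have htelescope (n : ℕ) :
      ∑ t ∈ Finset.range n, μ[I t | m] + μ[Z n | m] ≤ᵐ[μ] μ[Z 0 | m] := by
    induction n with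
    | zero => simpa using EventuallyLE.rfl
    | succ n ih =>
      filter_upwards [ih, hstep_m n] with ω hω hstepω
      simp only [Finset.sum_range_succ, Pi.add_apply, Finset.sum_apply] at hω hstepω ⊢
      linarith
  filter_upwards [htelescope n, condExp_nonneg (m := m) (hZnonneg n)] with ω hω hnonneg
  simp only [Pi.add_apply, Pi.zero_apply] at hω hnonneg
  linarith

end ConditionalExpectation

section NaturalFiltration

variable {Ω : Type*} [mΩ : MeasurableSpace Ω] {X : ℕ → Ω → ℝ}

theorem comap_le_natSigma {s t : ℕ} (hst : s ≤ t) :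
    MeasurableSpace.comap (X s) inferInstance ≤ natSigma X t :=
  le_iSup₂ (f := fun s (_ : s ∈ Finset.range (t + 1)) => MeasurableSpace.comap (X s) inferInstance)
    s (Finset.mem_range.2 (Nat.lt_succ_of_le hst))

theorem natSigma_zero : natSigma X 0 = MeasurableSpace.comap (X 0) inferInstance := by
  simp [natSigma]

theorem natSigma_le (hX : ∀ t, Measurable (X t)) (t : ℕ) : natSigma X t ≤ mΩ :=
  iSup₂_le fun s _ => (hX s).comap_le

theorem measurable_natSigma {s t : ℕ} (hst : s ≤ t) : Measurable[natSigma X t] (X s) :=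
  (comap_measurable (X s)).mono (comap_le_natSigma hst) le_rfl

theorem measurableSet_natSigma_lt_of_eq_sInf {xmin : ℝ} {T : Ω → ℕ∞}
    (hT : ∀ ω, T ω = sInf ((fun n : ℕ => (n : ℕ∞)) '' {t : ℕ | X t ω ≤ xmin})) (t : ℕ) :
    MeasurableSet[natSigma X t] {ω | (t : ℕ∞) < T ω} := by
  have hA : {ω | (t : ℕ∞) < T ω} = ⋂ s ∈ Finset.range (t + 1), X s ⁻¹' Ioi xmin := by
    ext ω
    simp only [mem_ofPred_eq, hT, ENat.coe_lt_sInf_image_coe_iff, Finset.mem_range,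
      Nat.lt_succ_iff, mem_iInter, mem_preimage, mem_Ioi]
    exact forall_congr' fun s => by rw [← not_lt, ← not_le (a := s)]; exact not_imp_not
  rw [hA]
  exact Finset.measurableSet_biInter _ fun s hs =>
    comap_le_natSigma (Nat.lt_succ_iff.1 (Finset.mem_range.1 hs)) _
      ⟨Ioi xmin, measurableSet_Ioi, rfl⟩

end NaturalFiltration

theorem sum_condExp_lt_hittingTime_le_integral {Ω : Type*} [mΩ : MeasurableSpace Ω]
    {μ : Measure Ω} [IsFiniteMeasure μ] {X : ℕ → Ω → ℝ} (hX : ∀ t, Measurable (X t))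
    (hXi : ∀ t, Integrable (X t) μ) {xmin : ℝ} {T : Ω → ℕ∞}
    (hT : ∀ ω, T ω = sInf ((fun n : ℕ => (n : ℕ∞)) '' {t : ℕ | X t ω ≤ xmin}))
    {φ : ℝ → ℝ} {c : ℝ} (hφ : Antitone φ) (hφbd : ∀ x, φ x ∈ Icc 0 c)
    (hnonneg : ∀ t : ℕ, ∀ᵐ ω ∂μ, (t : ℕ∞) ≤ T ω → xmin ≤ X t ω)
    (hdrift : ∀ t : ℕ, ∀ᵐ ω ∂μ, (t : ℕ∞) < T ω →
      1 ≤ φ (X t ω) * (X t ω - μ[X (t + 1) | natSigma X t] ω)) (n : ℕ) :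
    ∑ t ∈ Finset.range n, μ⟦{ω | (t : ℕ∞) < T ω} | MeasurableSpace.comap (X 0) inferInstance⟧
      ≤ᵐ[μ] fun ω => ∫ z in xmin..X 0 ω, φ z := by
  set g : ℝ → ℝ := fun x => ∫ z in xmin..x, φ z
  have hA := measurableSet_natSigma_lt_of_eq_sInf hT
  have hA_succ (t : ℕ) : {ω | ((t + 1 : ℕ) : ℕ∞) < T ω} ⊆ {ω | (t : ℕ∞) < T ω} :=
    fun _ hω => by simp only [mem_ofPred_eq] at hω ⊢; exact (Nat.cast_lt.2 t.lt_succ_self).trans hω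
  have hg : Continuous g :=
    intervalIntegral.continuous_primitive (fun _ _ => hφ.intervalIntegrable) xmin
  have hφnorm (x : ℝ) : ‖φ x‖ ≤ c := by rw [Real.norm_of_nonneg (hφbd x).1]; exact (hφbd x).2
  have hg_nonneg (x : ℝ) (hx : xmin ≤ x) : 0 ≤ g x :=
    intervalIntegral.integral_nonneg hx fun z _ => (hφbd z).1
  have hgX (t : ℕ) : Integrable (g ∘ X t) μ :=
    integrable_intervalIntegral_comp (fun _ _ => hφ.intervalIntegrable) hφnorm (hX t) (hXi t) xmin
  have hstep (t : ℕ) := condExp_indicator_comp_add_indicator_one_le (natSigma_le hX t)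
    (hφ.integral_le_integral_add_sub_mul xmin) hg.measurable hφ.measurable hφnorm
    (measurable_natSigma le_rfl) (hXi t) (hXi (t + 1)) (hgX t) (hgX (t + 1)) (hA t)
    (natSigma_le hX _ _ (hA (t + 1))) (hA_succ t)
    (by filter_upwards [hnonneg (t + 1)] with ω hω hωA
        exact hg_nonneg _ (hω (Order.add_one_le_of_lt hωA)))
    (hdrift t)
  have hsum := sum_condExp_le_condExp_of_condExp_add_le
    (fun t => comap_le_natSigma (Nat.zero_le t)) (natSigma_le hX)
    (fun t => (hgX t).indicator (natSigma_le hX _ _ (hA t)))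
    (fun t => (integrable_const 1).indicator (natSigma_le hX _ _ (hA t)))
    (fun t => by
      filter_upwards [hnonneg t] with ω hω
      exact indicator_apply_nonneg fun hωA => hg_nonneg _ (hω (le_of_lt hωA)))
    hstep n
  have hZ0 : μ[{ω | ((0 : ℕ) : ℕ∞) < T ω}.indicator (g ∘ X 0) |
      MeasurableSpace.comap (X 0) inferInstance] = {ω | ((0 : ℕ) : ℕ∞) < T ω}.indicator (g ∘ X 0) :=
    condExp_of_stronglyMeasurable (hX 0).comap_le
      ((hg.measurable.comp (comap_measurable (β := ℝ) (X 0))).indicator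
        (natSigma_zero (X := X) ▸ hA 0)).stronglyMeasurable
      ((hgX 0).indicator (natSigma_le hX _ _ (hA 0)))
  filter_upwards [hsum, hnonneg 0] with ω hω h0
  rw [hZ0] at hω
  exact hω.trans (indicator_apply_le' (fun _ => le_rfl) fun _ => hg_nonneg _ (h0 (by simp)))

theorem upper_variable_drift_unbounded_hitting_target_general
    {Ω : Type*} [MeasurableSpace Ω] [StandardBorelSpace Ω]
    (μ : Measure Ω) [IsProbabilityMeasure μ]
    (X : ℕ → Ω → ℝ) (hXmeas : ∀ t, Measurable (X t)) (hXint : ∀ t, Integrable (X t) μ)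
    (xmin : ℝ)
    (T : Ω → ℕ∞)
    (hT : ∀ ω, T ω = sInf ((fun n : ℕ => (n : ℕ∞)) '' {t : ℕ | X t ω ≤ xmin}))
    -- `D` is a real interval containing `xmin` and all values `x ≥ xmin` the process
    -- can take up to time `T`
    (D : Set ℝ) (hDconn : D.OrdConnected) (hxminD : xmin ∈ D)
    (hDmem : ∀ t : ℕ, ∀ ω, (t : ℕ∞) ≤ T ω → xmin ≤ X t ω → X t ω ∈ D)
    (h : ℝ → ℝ) (hmono : MonotoneOn h D) (hpos : ∀ x ∈ D, 0 < h x)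
    (hnonneg : ∀ t : ℕ, ∀ᵐ ω ∂μ, (t : ℕ∞) ≤ T ω → xmin ≤ X t ω)
    (hdrift : ∀ t : ℕ, ∀ᵐ ω ∂μ, (t : ℕ∞) < T ω →
      h (X t ω) ≤ X t ω - (μ[X (t + 1) | natSigma X t]) ω) :
    ∀ᵐ ω ∂μ,
      (∫⁻ ω', (T ω' : ℝ≥0∞) ∂(condExpKernel μ (MeasurableSpace.comap (X 0) inferInstance) ω))
        ≤ ENNReal.ofReal (∫ z in xmin..(X 0 ω), 1 / h z) := by
  have hE : IsLeast (D ∩ Ici xmin) xmin := ⟨⟨hxminD, self_mem_Ici⟩, fun _ hx => hx.2⟩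
  obtain ⟨φ, hφ, hφbd, hφE⟩ := exists_antitone_inv_extension hE
    (hmono.mono inter_subset_left) fun x hx => hpos x hx.1
  have hmemE (t : ℕ) : ∀ᵐ ω ∂μ, (t : ℕ∞) ≤ T ω → X t ω ∈ D ∩ Ici xmin := by
    filter_upwards [hnonneg t] with ω hω ht using ⟨hDmem t ω ht (hω ht), hω ht⟩
  have hdriftφ (t : ℕ) : ∀ᵐ ω ∂μ, (t : ℕ∞) < T ω →
      1 ≤ φ (X t ω) * (X t ω - μ[X (t + 1) | natSigma X t] ω) := by
    filter_upwards [hdrift t, hmemE t] with ω hdω hEω ht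
    rw [← hφE (hEω ht.le), le_inv_mul_iff₀ (hpos _ (hEω ht.le).1), mul_one]
    exact hdω ht
  have hintegral : ∀ᵐ ω ∂μ, ∫ z in xmin..X 0 ω, φ z = ∫ z in xmin..X 0 ω, 1 / h z := by
    filter_upwards [hmemE 0] with ω hω
    have hX0 := hω (by simp)
    refine intervalIntegral.integral_congr fun z hz => ?_
    rw [uIcc_of_le hX0.2] at hz
    simpa using (hφE ((hDconn.inter ordConnected_Ici).out hE.1 hX0 hz)).symm
  filter_upwards [lintegral_condExpKernel_le_of_sum_condExp_le (hXmeas 0).comap_le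
    (fun t => natSigma_le hXmeas t _ (measurableSet_natSigma_lt_of_eq_sInf hT t))
    (sum_condExp_lt_hittingTime_le_integral hXmeas hXint hT hφ hφbd hnonneg hdriftφ),
    hintegral] with ω hω hintω
  rwa [← hintω]

/-- **Upper Variable Drift, Unbounded, Hitting Target.** -/
theorem upper_variable_drift_unbounded_hitting_target
    {Ω : Type*} [MeasurableSpace Ω] [StandardBorelSpace Ω]
    (μ : Measure Ω) [IsProbabilityMeasure μ]
    (X : ℕ → Ω → ℝ) (hXmeas : ∀ t, Measurable (X t)) (hXint : ∀ t, Integrable (X t) μ)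
    (xmin : ℝ) (hxmin : 0 ≤ xmin)
    (T : Ω → ℕ∞)
    (hT : ∀ ω, T ω = sInf ((fun n : ℕ => (n : ℕ∞)) '' {t : ℕ | X t ω ≤ xmin}))
    -- `D` is a real interval containing `xmin` and all values `x ≥ xmin` the process
    -- can take up to time `T`
    (D : Set ℝ) (hDconn : D.OrdConnected) (hxminD : xmin ∈ D)
    (hDmem : ∀ t : ℕ, ∀ ω, (t : ℕ∞) ≤ T ω → xmin ≤ X t ω → X t ω ∈ D)
    (h : ℝ → ℝ) (hmono : MonotoneOn h D) (hpos : ∀ x ∈ D, 0 < h x)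
    (hnonneg : ∀ t : ℕ, ∀ᵐ ω ∂μ, (t : ℕ∞) ≤ T ω → xmin ≤ X t ω)
    (hdrift : ∀ t : ℕ, ∀ᵐ ω ∂μ, (t : ℕ∞) < T ω →
      h (X t ω) ≤ X t ω - (μ[X (t + 1) | natSigma X t]) ω) :
    ∀ᵐ ω ∂μ,
      (∫⁻ ω', (T ω' : ℝ≥0∞) ∂(condExpKernel μ (MeasurableSpace.comap (X 0) inferInstance) ω))
        ≤ ENNReal.ofReal (∫ z in xmin..(X 0 ω), 1 / h z) :=
  upper_variable_drift_unbounded_hitting_target_general μ X hXmeas hXint xmin T hT D hDconn hxminD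
    hDmem h hmono hpos hnonneg hdrift
end
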